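/- arXiv:2009.02985 — 4 statements merged into one kernel-verified Lean document; each statement's English description precedes it below -/
import Mathlib

section
/- Let A be a parity tree automaton accepting a tree t, with accepting computation φ. Suppose there is an infinite antichain Â of nodes, a state q, and two distinct accepting computations φ1 ≠ φ2 of A_q on a tree t_amb, such that φ(u) = q for all u ∈ Â. Let t̂ be obtained from t by grafting t_amb at every node of Â, and φ̂ obtained from φ by grafting φ1 at every node of Â. Then for every subset A' ⊆ Â, the computation obtained from φ̂ by grafting φ2 instead of φ1 at the nodes of A' is an accepting computation of A on t̂, and distinct subsets A' yield distinct computations. Consequently A has at least 2^{ℵ0} accepting computations on t̂. -/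
/-- A parity tree automaton over state set `Q` and alphabet `Γ`. -/
structure PTA (Q Γ : Type*) where
  init : Set Q
  delta : Set (Q × Γ × Q × Q)
  color : Q → ℕ

variable {Q Γ : Type*}

/-- `φ` is a computation of `A` on the tree `t`. -/
def IsComputation (A : PTA Q Γ) (t : List Bool → Γ) (φ : List Bool → Q) : Prop :=
  φ [] ∈ A.init ∧ ∀ v : List Bool, (φ v, t v, φ (v ++ [false]), φ (v ++ [true])) ∈ A.delta

/-- The node at depth `i` along the infinite branch determined by `d`. -/
def branchNode (d : ℕ → Bool) (i : ℕ) : List Bool :=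
  List.ofFn (fun j : Fin i => d j)

/-- `c` occurs infinitely often in the sequence `f`. -/
def InfOften (f : ℕ → ℕ) (c : ℕ) : Prop := ∀ N : ℕ, ∃ i, N ≤ i ∧ f i = c

/-- The parity condition: the maximal value occurring infinitely often is even. -/
def ParityAccept (f : ℕ → ℕ) : Prop :=
  ∃ c, Even c ∧ InfOften f c ∧ ∀ c', InfOften f c' → c' ≤ c

/-- `φ` is an accepting computation of `A` on `t`. -/
def IsAccepting (A : PTA Q Γ) (t : List Bool → Γ) (φ : List Bool → Q) : Prop :=
  IsComputation A t φ ∧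
    ∀ d : ℕ → Bool, ParityAccept (fun i => A.color (φ (branchNode d i)))

/-- The set of accepting computations of `A` on `t`. -/
def ACC (A : PTA Q Γ) (t : List Bool → Γ) : Set (List Bool → Q) :=
  {φ | IsAccepting A t φ}

/-- The language of `A`. -/
def Lang (A : PTA Q Γ) : Set (List Bool → Γ) := {t | (ACC A t).Nonempty}

/-- `A_q`: the automaton `A` with initial-state set `{q}`. -/
def restart (A : PTA Q Γ) (q : Q) : PTA Q Γ := { A with init := {q} }

/-- Grafting `t1` at node `v` in `t`. -/
def graft {α : Type*} (t t1 : List Bool → α) (v : List Bool) : List Bool → α :=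
  fun u => if v <+: u then t1 (u.drop v.length) else t u

open Classical

/-- Grafting a tree `g` at every node of a set `S` (intended for antichains):
below a node of `S` the labels come from `g`, elsewhere from `f`. -/
noncomputable def graftMany {α : Type*} (S : Set (List Bool)) (f g : List Bool → α) :
    List Bool → α :=
  fun u => if h : ∃ v, v ∈ S ∧ v <+: u then g (u.drop (Classical.choose h).length)
           else f u

universe u

/-! Grafting an accepting run of `A_q` at every node of an antichain on which a run of `A` is
in state `q` gives again an accepting run: transitions match at the graft points, and a branch
either avoids the antichain or, from its unique antichain node on, follows the grafted run, whose
parity condition is insensitive to the finite prefix. Choosing, independently at each of the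
infinitely many antichain nodes, which of `φ₁, φ₂` to graft yields `2 ^ ℵ₀` distinct runs. -/

open Set Cardinal

universe v w

lemma branchNode_add (d : ℕ → Bool) (n k : ℕ) :
    branchNode d (n + k) = branchNode d n ++ branchNode (fun j => d (n + j)) k := by
  simp [branchNode, List.ofFn_add]

lemma eq_branchNode_of_prefix {d : ℕ → Bool} {w : List Bool} {m : ℕ}
    (h : w <+: branchNode d m) : w = branchNode d w.length := by
  have hle : w.length ≤ m := by simpa [branchNode] using h.length_le
  have hpre : branchNode d w.length <+: branchNode d m := by
    rw [← Nat.add_sub_cancel' hle, branchNode_add]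
    exact List.prefix_append _ _
  exact (List.prefix_of_prefix_length_le h hpre (by simp [branchNode])).eq_of_length
    (by simp [branchNode])

lemma InfOften.add_iff {f : ℕ → ℕ} {c n : ℕ} :
    InfOften (fun k => f (n + k)) c ↔ InfOften f c := by
  constructor
  · intro h N
    obtain ⟨k, hk, hfk⟩ := h N
    exact ⟨n + k, by omega, hfk⟩
  · intro h N
    obtain ⟨i, hi, hfi⟩ := h (n + N)
    refine ⟨i - n, by omega, ?_⟩
    show f (n + (i - n)) = c
    rwa [Nat.add_sub_cancel' (by omega)]

lemma ParityAccept.of_add {f : ℕ → ℕ} {n : ℕ} (h : ParityAccept (fun k => f (n + k))) :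
    ParityAccept f := by
  obtain ⟨c, hc, hinf, hmax⟩ := h
  exact ⟨c, hc, InfOften.add_iff.1 hinf, fun c' hc' => hmax c' (InfOften.add_iff.2 hc')⟩

section Graft

variable {α : Type*} {S : Set (List Bool)} {f g : List Bool → α}

lemma graftMany_of_not_exists {u : List Bool} (h : ¬ ∃ v, v ∈ S ∧ v <+: u) :
    graftMany S f g u = f u :=
  dif_neg h

lemma graftMany_append (hS : IsAntichain (· <+: ·) S) {v : List Bool} (hv : v ∈ S)
    (r : List Bool) : graftMany S f g (v ++ r) = g r := by
  have h : ∃ w, w ∈ S ∧ w <+: v ++ r := ⟨v, hv, List.prefix_append _ _⟩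
  obtain ⟨hw, hwu⟩ := Classical.choose_spec h
  have hwv : Classical.choose h = v := by
    by_contra hne
    rcases List.prefix_or_prefix_of_prefix hwu (List.prefix_append v r) with h' | h'
    · exact hS hw hv hne h'
    · exact hS hv hw (Ne.symm hne) h'
  simp only [graftMany, dif_pos h, hwv, List.drop_left]

lemma graftMany_of_mem (hS : IsAntichain (· <+: ·) S) {v : List Bool} (hv : v ∈ S) :
    graftMany S f g v = g [] := by
  simpa using graftMany_append (f := f) (g := g) hS hv []

lemma graftMany_append_of_not_mem {T : Set (List Bool)} (hT : IsAntichain (· <+: ·) T)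
    (hST : S ⊆ T) {w : List Bool} (hwT : w ∈ T) (hwS : w ∉ S) (r : List Bool) :
    graftMany S f g (w ++ r) = f (w ++ r) := by
  refine graftMany_of_not_exists ?_
  rintro ⟨v, hvS, hv⟩
  have hvw : v ≠ w := fun h => hwS (h ▸ hvS)
  rcases List.prefix_or_prefix_of_prefix hv (List.prefix_append w r) with h' | h'
  · exact hT (hST hvS) hwT hvw h'
  · exact hT hwT (hST hvS) hvw.symm h'

lemma graftMany_graftMany_of_subset {T : Set (List Bool)} (hT : IsAntichain (· <+: ·) T)
    (hST : S ⊆ T) : graftMany S (graftMany T f g) g = graftMany T f g := by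
  funext u
  by_cases h : ∃ v, v ∈ S ∧ v <+: u
  · obtain ⟨v, hv, r, rfl⟩ := h
    rw [graftMany_append (hT.subset hST) hv, graftMany_append hT (hST hv)]
  · exact graftMany_of_not_exists h

lemma graftMany_concat_of_not_exists (hS : IsAntichain (· <+: ·) S)
    (hfg : ∀ v ∈ S, f v = g []) {u : List Bool} (hu : ¬ ∃ v, v ∈ S ∧ v <+: u) (b : Bool) :
    graftMany S f g (u ++ [b]) = f (u ++ [b]) := by
  by_cases h : ∃ v, v ∈ S ∧ v <+: u ++ [b]
  · obtain ⟨v, hv, hvu⟩ := h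
    rcases List.prefix_concat_iff.1 hvu with rfl | h'
    · rw [graftMany_of_mem hS hv, hfg _ hv]
    · exact absurd ⟨v, hv, h'⟩ hu
  · exact graftMany_of_not_exists h

end Graft

section Grafting

variable {Q Γ : Type*} {A : PTA Q Γ} {q : Q} {S : Set (List Bool)}
  {t t' : List Bool → Γ} {φ ψ : List Bool → Q}

theorem IsComputation.graftMany (hS : IsAntichain (· <+: ·) S) (hφ : IsComputation A t φ)
    (hφq : ∀ v ∈ S, φ v = q) (hψ : IsComputation (restart A q) t' ψ) :
    IsComputation A (graftMany S t t') (graftMany S φ ψ) := by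
  have hφψ : ∀ v ∈ S, φ v = ψ [] := fun v hv => (hφq v hv).trans hψ.1.symm
  constructor
  · by_cases h : ∃ v, v ∈ S ∧ v <+: []
    · obtain ⟨v, hv, hnil⟩ := h
      rw [List.prefix_nil.1 hnil] at hv
      rw [graftMany_of_mem hS hv, ← hφψ _ hv]
      exact hφ.1
    · rw [graftMany_of_not_exists h]
      exact hφ.1
  · intro u
    by_cases h : ∃ v, v ∈ S ∧ v <+: u
    · obtain ⟨v, hv, r, rfl⟩ := h
      simp only [List.append_assoc, graftMany_append hS hv]
      exact hψ.2 r
    · simp only [graftMany_of_not_exists h, graftMany_concat_of_not_exists hS hφψ h]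
      exact hφ.2 u

theorem parityAccept_graftMany (hS : IsAntichain (· <+: ·) S)
    (hφ : ∀ d, ParityAccept (fun i => A.color (φ (branchNode d i))))
    (hψ : ∀ d, ParityAccept (fun i => A.color (ψ (branchNode d i)))) (d : ℕ → Bool) :
    ParityAccept (fun i => A.color (graftMany S φ ψ (branchNode d i))) := by
  by_cases h : ∃ i, ∃ v, v ∈ S ∧ v <+: branchNode d i
  · obtain ⟨i, v, hv, hvi⟩ := h
    -- from the depth of `v` on, the branch runs through the run grafted at `v`
    refine ParityAccept.of_add (n := v.length) ?_
    simp only [branchNode_add, ← eq_branchNode_of_prefix hvi, graftMany_append hS hv]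
    exact hψ _
  · have hφ_eq : ∀ i, graftMany S φ ψ (branchNode d i) = φ (branchNode d i) :=
      fun i => graftMany_of_not_exists fun ⟨v, hv, hvi⟩ => h ⟨i, v, hv, hvi⟩
    simpa only [hφ_eq] using hφ d

theorem graftMany_mem_ACC (hS : IsAntichain (· <+: ·) S) (hφ : φ ∈ ACC A t)
    (hφq : ∀ v ∈ S, φ v = q) (hψ : ψ ∈ ACC (restart A q) t') :
    graftMany S φ ψ ∈ ACC A (graftMany S t t') :=
  ⟨hφ.1.graftMany hS hφq hψ.1, parityAccept_graftMany hS hφ.2 hψ.2⟩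

end Grafting

lemma injOn_graftMany_powerset {α : Type*} {S : Set (List Bool)}
    (hS : IsAntichain (· <+: ·) S) {f g₁ g₂ : List Bool → α} (hne : g₁ ≠ g₂) :
    InjOn (fun S' => graftMany S' (graftMany S f g₁) g₂) (𝒫 S) := by
  have hne_of : ∀ S₁ ∈ 𝒫 S, ∀ S₂ ∈ 𝒫 S, ∀ w ∈ S₁, w ∉ S₂ →
      graftMany S₁ (graftMany S f g₁) g₂ ≠ graftMany S₂ (graftMany S f g₁) g₂ := by
    intro S₁ hS₁ S₂ hS₂ w hw₁ hw₂ heq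
    obtain ⟨r, hr⟩ := Function.ne_iff.1 hne
    have := congrFun heq (w ++ r)
    rw [graftMany_append (hS.subset hS₁) hw₁,
      graftMany_append_of_not_mem hS hS₂ (hS₁ hw₁) hw₂, graftMany_append hS (hS₁ hw₁)] at this
    exact hr this.symm
  intro S₁ hS₁ S₂ hS₂ heq
  ext w
  exact ⟨fun hw₁ => by_contra fun hw₂ => hne_of S₁ hS₁ S₂ hS₂ w hw₁ hw₂ heq,
    fun hw₂ => by_contra fun hw₁ => hne_of S₂ hS₂ S₁ hS₁ w hw₂ hw₁ heq.symm⟩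

lemma continuum_le_mk_of_injOn_powerset {α : Type v} {β : Type w} {s : Set α}
    (hs : s.Infinite) {F : Set α → β} (hF : InjOn F (𝒫 s)) {T : Set β}
    (hFT : MapsTo F (𝒫 s) T) : 𝔠 ≤ #T := by
  have hs' : ℵ₀ ≤ #s := Cardinal.infinite_iff.1 hs.to_subtype
  rw [← lift_le.{v}]
  calc lift.{v} 𝔠 = lift.{w} (2 ^ ℵ₀) := by
        rw [two_power_aleph0, lift_continuum, lift_continuum]
    _ ≤ lift.{w} #(𝒫 s) := by
        rw [mk_powerset]
        exact lift_le.2 (power_le_power_left two_ne_zero hs')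
    _ = lift.{v} #(F '' 𝒫 s) := (mk_image_eq_of_injOn_lift F _ hF).symm
    _ ≤ lift.{v} #T := lift_le.2 (mk_le_mk_of_subset hFT.image_subset)

/-- If an accepting computation `φ` of `A` on `t` assigns the same state `q` to
every node of an infinite antichain `Ahat`, and `A_q` has two distinct accepting
computations `φ1 ≠ φ2` on some tree `t_amb`, then grafting `t_amb` at every
node of `Ahat` yields a tree `t̂` on which, for every `A' ⊆ Ahat`, grafting `φ2` at
the nodes of `A'` on top of the grafted computation is accepting, distinct
subsets give distinct computations, and `A` has at least continuum many
accepting computations on `t̂`. -/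
theorem uncountable_ambiguity {Q : Type u} {Γ : Type*} (A : PTA Q Γ)
    (t : List Bool → Γ) (φ : List Bool → Q) (hφ : φ ∈ ACC A t)
    (Ahat : Set (List Bool)) (hinf : Ahat.Infinite)
    (hanti : ∀ u ∈ Ahat, ∀ v ∈ Ahat, u ≠ v → ¬ u <+: v ∧ ¬ v <+: u)
    (q : Q) (hq : ∀ u ∈ Ahat, φ u = q)
    (tamb : List Bool → Γ) (φ1 φ2 : List Bool → Q) (hne : φ1 ≠ φ2)
    (h1 : φ1 ∈ ACC (restart A q) tamb) (h2 : φ2 ∈ ACC (restart A q) tamb) :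
    (∀ A' ⊆ Ahat, graftMany A' (graftMany Ahat φ φ1) φ2 ∈ ACC A (graftMany Ahat t tamb)) ∧
    (∀ A1 ⊆ Ahat, ∀ A2 ⊆ Ahat, A1 ≠ A2 →
        graftMany A1 (graftMany Ahat φ φ1) φ2 ≠ graftMany A2 (graftMany Ahat φ φ1) φ2) ∧
    Cardinal.continuum ≤ Cardinal.mk (ACC A (graftMany Ahat t tamb)) := by
  have hS : IsAntichain (· <+: ·) Ahat := fun u hu v hv huv => (hanti u hu v hv huv).1
  have accepting : ∀ A' ⊆ Ahat,
      graftMany A' (graftMany Ahat φ φ1) φ2 ∈ ACC A (graftMany Ahat t tamb) := by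
    intro A' hA'
    have hφ1 : graftMany Ahat φ φ1 ∈ ACC A (graftMany Ahat t tamb) :=
      graftMany_mem_ACC hS hφ hq h1
    have hφ1q : ∀ v ∈ A', graftMany Ahat φ φ1 v = q :=
      fun v hv => (graftMany_of_mem hS (hA' hv)).trans h1.1.1
    simpa only [graftMany_graftMany_of_subset hS hA'] using
      graftMany_mem_ACC (hS.subset hA') hφ1 hφ1q h2
  have hinj := injOn_graftMany_powerset (f := φ) hS hne
  exact ⟨accepting, fun A1 hA1 A2 hA2 hne12 heq => hne12 (hinj hA1 hA2 heq),
    continuum_le_mk_of_injOn_powerset hinf hinj accepting⟩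
end

section
/- Let A be a parity tree automaton with t ∉ L(A), let φ be an accepting computation of A on a tree t', and let STR be a winning strategy of Pathfinder in the membership game G_{t,A}. Consider the play consistent with the positional Automaton strategy str_φ and with STR. Then this play contains an invalid move for Automaton (a move (q_l,q_r) from position (v,q) with (q, t(v), q_l, q_r) ∉ δ), and if the first invalid move occurs after Pathfinder moves d_0,...,d_{i-1}, then t(v) ≠ t'(v) for v = d_0···d_{i-1}. -/
variable {Q Γ : Type*}

/-- The positional Automaton strategy induced by a computation `φ`:
`str_φ(v, q) := (φ(v·l), φ(v·r))`. -/
def strOf (φ : List Bool → Q) : List Bool → Q → Q × Q :=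
  fun v _ => (φ (v ++ [false]), φ (v ++ [true]))

/-- The sequence of Automaton positions `(v_i, q_i)` in the play of the
membership game `G_{t,A}` where Automaton plays the positional strategy `str`
and Pathfinder plays the positional strategy `STR` (which chooses a direction
`d ∈ {l,r}`, with `l = false`, `r = true`), starting from `(ε, qI)`. -/
def playPos (qI : Q) (str : List Bool → Q → Q × Q)
    (STR : List Bool → Q → Q → Bool) : ℕ → List Bool × Q
  | 0 => ([], qI)
  | n + 1 =>
    let p := playPos qI str STR n
    let e := str p.1 p.2
    let dd := STR p.1 e.1 e.2
    (p.1 ++ [dd], if dd then e.2 else e.1)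

/-- At step `i` of the play, Automaton's move is invalid with respect to
the input tree `t`. -/
def InvalidAt (A : PTA Q Γ) (t : List Bool → Γ) (qI : Q)
    (str : List Bool → Q → Q × Q) (STR : List Bool → Q → Q → Bool)
    (i : ℕ) : Prop :=
  ((playPos qI str STR i).2, t (playPos qI str STR i).1,
    (str (playPos qI str STR i).1 (playPos qI str STR i).2).1,
    (str (playPos qI str STR i).1 (playPos qI str STR i).2).2) ∉ A.delta

/-- The play of `str` against `STR` in `G_{t,A}` is won by Pathfinder:
either Automaton makes an invalid move, or the maximal color of Automaton
positions occurring infinitely often is odd. -/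
def PathfinderWinsPlay (A : PTA Q Γ) (t : List Bool → Γ) (qI : Q)
    (str : List Bool → Q → Q × Q) (STR : List Bool → Q → Q → Bool) : Prop :=
  (∃ i, InvalidAt A t qI str STR i) ∨
    ∃ c, Odd c ∧ InfOften (fun i => A.color (playPos qI str STR i).2) c ∧
      ∀ c', InfOften (fun i => A.color (playPos qI str STR i).2) c' → c' ≤ c

def playDir (qI : Q) (str : List Bool → Q → Q × Q) (STR : List Bool → Q → Q → Bool)
    (n : ℕ) : Bool :=
  let p := playPos qI str STR n
  STR p.1 (str p.1 p.2).1 (str p.1 p.2).2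

theorem branchNode_succ (d : ℕ → Bool) (n : ℕ) :
    branchNode d (n + 1) = branchNode d n ++ [d n] := by
  simp only [branchNode, List.ofFn_succ', List.concat_eq_append, Fin.val_castSucc, Fin.val_last]

theorem playPos_fst_eq_branchNode (qI : Q) (str : List Bool → Q → Q × Q)
    (STR : List Bool → Q → Q → Bool) (n : ℕ) :
    (playPos qI str STR n).1 = branchNode (playDir qI str STR) n := by
  induction n with
  | zero => rfl
  | succ n ih => rw [branchNode_succ, ← ih]; rfl

theorem playPos_strOf_snd {φ : List Bool → Q} {qI : Q} (h0 : φ [] = qI)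
    (STR : List Bool → Q → Q → Bool) (n : ℕ) :
    (playPos qI (strOf φ) STR n).2 = φ (playPos qI (strOf φ) STR n).1 := by
  cases n with
  | zero => exact h0.symm
  | succ n =>
    have hchoice : ∀ (b : Bool) (v : List Bool),
        (if b = true then φ (v ++ [true]) else φ (v ++ [false])) = φ (v ++ [b]) := by
      intro b v; cases b <;> rfl
    exact hchoice _ _

theorem not_parityAccept_of_odd_max {f : ℕ → ℕ} {c : ℕ} (hodd : Odd c) (hc : InfOften f c)
    (hmax : ∀ c', InfOften f c' → c' ≤ c) : ¬ ParityAccept f := by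
  rintro ⟨c', heven, hc', hmax'⟩
  have : c' = c := le_antisymm (hmax c' hc') (hmax' c hc)
  exact Nat.not_even_iff_odd.mpr hodd (this ▸ heven)

theorem exists_invalidAt_strOf {A : PTA Q Γ} {t t' : List Bool → Γ} {φ : List Bool → Q} {qI : Q}
    (hφ : IsAccepting A t' φ) (h0 : φ [] = qI) {STR : List Bool → Q → Q → Bool}
    (hwin : PathfinderWinsPlay A t qI (strOf φ) STR) :
    ∃ i, InvalidAt A t qI (strOf φ) STR i := by
  rcases hwin with hinv | ⟨c, hodd, hc, hmax⟩
  · exact hinv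
  · have hcolors : (fun i => A.color (playPos qI (strOf φ) STR i).2)
        = fun i => A.color (φ (branchNode (playDir qI (strOf φ) STR) i)) := by
      funext i
      rw [playPos_strOf_snd h0, playPos_fst_eq_branchNode]
    rw [hcolors] at hc hmax
    exact absurd (hφ.2 _) (not_parityAccept_of_odd_max hodd hc hmax)

theorem ne_of_invalidAt_strOf {A : PTA Q Γ} {t t' : List Bool → Γ} {φ : List Bool → Q} {qI : Q}
    (hφ : IsComputation A t' φ) (h0 : φ [] = qI) {STR : List Bool → Q → Q → Bool} {i : ℕ}
    (hinv : InvalidAt A t qI (strOf φ) STR i) :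
    t (playPos qI (strOf φ) STR i).1 ≠ t' (playPos qI (strOf φ) STR i).1 := by
  intro heq
  apply hinv
  rw [playPos_strOf_snd h0, heq]
  exact hφ.2 _

theorem winning_strategy_leads_general (A : PTA Q Γ) (t t' : List Bool → Γ) (qI : Q)
    (hI : A.init = {qI})
    (φ : List Bool → Q) (hφ : φ ∈ ACC A t')
    (STR : List Bool → Q → Q → Bool)
    (hwin : ∀ str : List Bool → Q → Q × Q, PathfinderWinsPlay A t qI str STR) :
    (∃ i, InvalidAt A t qI (strOf φ) STR i) ∧
    ∀ i : ℕ, InvalidAt A t qI (strOf φ) STR i →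
      (∀ j, j < i → ¬ InvalidAt A t qI (strOf φ) STR j) →
      t (playPos qI (strOf φ) STR i).1 ≠ t' (playPos qI (strOf φ) STR i).1 := by
  have h0 : φ [] = qI := by simpa [hI] using hφ.1.1
  exact ⟨exists_invalidAt_strOf hφ h0 (hwin (strOf φ)),
    fun _ hinv _ => ne_of_invalidAt_strOf hφ.1 h0 hinv⟩

/-- If `t ∉ L(A)`, `φ` is an accepting computation of `A` on `t'`, and `STR` is
a winning strategy of Pathfinder in the membership game `G_{t,A}`, then the
play of `str_φ` against `STR` contains an invalid Automaton move, and at the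
first invalid move, the node `v = d_0⋯d_{i-1}` reached satisfies
`t(v) ≠ t'(v)`. -/
theorem winning_strategy_leads (A : PTA Q Γ) (t t' : List Bool → Γ) (qI : Q)
    (hI : A.init = {qI}) (hnt : t ∉ Lang A)
    (φ : List Bool → Q) (hφ : φ ∈ ACC A t')
    (STR : List Bool → Q → Q → Bool)
    (hwin : ∀ str : List Bool → Q → Q × Q, PathfinderWinsPlay A t qI str STR) :
    (∃ i, InvalidAt A t qI (strOf φ) STR i) ∧
    ∀ i : ℕ, InvalidAt A t qI (strOf φ) STR i →
      (∀ j, j < i → ¬ InvalidAt A t qI (strOf φ) STR j) →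
      t (playPos qI (strOf φ) STR i).1 ≠ t' (playPos qI (strOf φ) STR i).1 :=
  winning_strategy_leads_general A t t' qI hI φ hφ STR hwin
end

section
/- Let L_left be the set of infinite {0,1}²-labeled binary trees t[X,Y] (characteristic trees of sets X, Y ⊆ {l,r}*) with X = l* and Y ∩ l* = ∅, and let L_{X⊆Y↓} be the set of trees t[X,Y] such that every node of X has a descendant (w.r.t. the prefix order, greater or equal) in Y. Then t[X,Y] ∈ L_{X⊆Y↓} ∩ L_left iff: (1) every node in l* is labeled (1,0), and (2) there is an infinite set I ⊆ ℕ such that for i ∈ I the subtree rooted at l^i·r has empty X-part and nonempty Y-part, and for i ∉ I the subtree rooted at l^i·r is entirely labeled (0,0). -/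
/-- The set `l* = {ε, l, ll, ...}` of nodes on the leftmost branch
(`l = false`). -/
def lStar : Set (List Bool) := Set.range (fun i : ℕ => List.replicate i false)

lemma split_list (u : List Bool) :
    u ∈ lStar ∨ ∃ i w, u = List.replicate i false ++ true :: w := by
  induction u with
  | nil => exact Or.inl ⟨0, rfl⟩
  | cons b v ih =>
    cases b with
    | true => exact Or.inr ⟨0, v, rfl⟩
    | false =>
      rcases ih with ⟨i, hi⟩ | ⟨i, w, hw⟩
      · exact Or.inl ⟨i + 1, by simp [List.replicate_succ, ← hi]⟩
      · exact Or.inr ⟨i + 1, w, by simp [List.replicate_succ, hw]⟩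

lemma notStar (i : ℕ) (w : List Bool) :
    List.replicate i false ++ true :: w ∉ lStar := by
  rintro ⟨j, hj⟩
  replace hj : List.replicate j false = List.replicate i false ++ true :: w := hj
  have : true ∈ List.replicate j false := by
    rw [hj]; simp
  simpa using List.eq_of_mem_replicate this

lemma repl_prefix {i j : ℕ} (h : i ≤ j) :
    (List.replicate i false : List Bool) <+: List.replicate j false := by
  refine ⟨List.replicate (j - i) false, ?_⟩
  rw [← List.replicate_add, Nat.add_sub_cancel' h]

lemma prefix_index {i j : ℕ} {w : List Bool}
    (h : (List.replicate i false : List Bool) <+: List.replicate j false ++ true :: w) :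
    i ≤ j := by
  by_contra hij
  push_neg at hij
  have hlen : j < (List.replicate i false : List Bool).length := by simpa using hij
  have := h.getElem hlen
  rw [List.getElem_append_right (by simp)] at this
  simp at this

/-- Characterization of membership in `L_{X⊆Y↓} ∩ L_left` for the
characteristic tree `t[X,Y]`: `X = l*`, `Y ∩ l* = ∅` and every node of `X` has
a descendant in `Y`, iff every node of `l*` is labeled `(1,0)` and there is an
infinite set `I ⊆ ℕ` such that for `i ∈ I` the subtree rooted at `l^i·r` has
empty `X`-part and nonempty `Y`-part, while for `i ∉ I` it is entirely labeled
`(0,0)`. -/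
theorem left_downclosed_characterization (X Y : Set (List Bool)) :
    (X ⊆ {u : List Bool | ∃ y ∈ Y, u <+: y} ∧ X = lStar ∧ Y ∩ lStar = ∅) ↔
    ((∀ i : ℕ, List.replicate i false ∈ X ∧ List.replicate i false ∉ Y) ∧
      ∃ I : Set ℕ, I.Infinite ∧
        (∀ i ∈ I, (∀ w : List Bool, List.replicate i false ++ true :: w ∉ X) ∧
          (∃ w : List Bool, List.replicate i false ++ true :: w ∈ Y)) ∧
        (∀ i ∉ I, ∀ w : List Bool,
          List.replicate i false ++ true :: w ∉ X ∧
          List.replicate i false ++ true :: w ∉ Y)) := by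
  constructor
  · rintro ⟨hsub, hX, hY⟩
    have hnX : ∀ (i : ℕ) (w : List Bool), List.replicate i false ++ true :: w ∉ X := by
      intro i w h
      exact notStar i w (hX ▸ h)
    have hnY : ∀ i : ℕ, List.replicate i false ∉ Y := by
      intro i h
      have : List.replicate i false ∈ Y ∩ lStar := ⟨h, Set.mem_range_self i⟩
      rw [hY] at this
      exact this
    refine ⟨fun i => ⟨by rw [hX]; exact Set.mem_range_self i, hnY i⟩,
      {i | ∃ w, List.replicate i false ++ true :: w ∈ Y}, ?_, ?_, ?_⟩
    · apply Set.infinite_of_not_bddAbove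
      rintro ⟨n, hn⟩
      obtain ⟨y, hy, hpre⟩ := hsub (show List.replicate (n+1) false ∈ X by
        rw [hX]; exact Set.mem_range_self (n+1))
      rcases split_list y with ⟨j, hj⟩ | ⟨j, w, hw⟩
      · replace hj : List.replicate j false = y := hj
        exact hnY j (by rw [hj]; exact hy)
      · subst hw
        have hj : n + 1 ≤ j := prefix_index hpre
        have : j ≤ n := hn ⟨w, hy⟩
        omega
    · exact fun i hi => ⟨hnX i, hi⟩
    · intro i hi w
      exact ⟨hnX i w, fun h => hi ⟨w, h⟩⟩
  · rintro ⟨h1, I, hInf, hI, hnI⟩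
    have hnX : ∀ (i : ℕ) (w : List Bool), List.replicate i false ++ true :: w ∉ X := by
      intro i w
      by_cases hi : i ∈ I
      · exact (hI i hi).1 w
      · exact (hnI i hi w).1
    have hXeq : X = lStar := by
      ext u
      constructor
      · intro hu
        rcases split_list u with h | ⟨i, w, hw⟩
        · exact h
        · exact absurd hu (hw ▸ hnX i w)
      · rintro ⟨i, rfl⟩; exact (h1 i).1
    refine ⟨?_, hXeq, ?_⟩
    · intro u hu
      rw [hXeq] at hu
      obtain ⟨i, rfl⟩ := hu
      obtain ⟨j, hjI, hij⟩ := hInf.exists_gt i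
      obtain ⟨w, hw⟩ := (hI j hjI).2
      exact ⟨_, hw, (repl_prefix hij.le).trans ⟨true :: w, rfl⟩⟩
    · ext y
      simp only [Set.mem_inter_iff, Set.mem_empty_iff_false, iff_false]
      rintro ⟨hy, i, rfl⟩
      exact (h1 i).2 hy
end

section
/- Let t' be an infinite {0,1}-labeled binary tree such that (1) every node in l* is labeled 1, and (2) there is an infinite set I ⊆ ℕ such that for i ∈ I the set of 1-labeled nodes of the subtree rooted at l^i·r is perfect, and for i ∉ I the subtree rooted at l^i·r has no 1-labeled nodes. Then the set X of 1-labeled nodes of t' is perfect, i.e., for every u ∈ X there exist incomparable v_1, v_2 ∈ X strictly above u. -/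
/-- Two nodes are incomparable if neither is a prefix of the other. -/
def Incomp (u v : List Bool) : Prop := ¬ u <+: v ∧ ¬ v <+: u

/-- A set of nodes is perfect if it is nonempty and every element has two
incomparable elements strictly above it. -/
def IsPerfect (X : Set (List Bool)) : Prop :=
  X.Nonempty ∧ ∀ u ∈ X, ∃ v1 ∈ X, ∃ v2 ∈ X,
    Incomp v1 v2 ∧ (u <+: v1 ∧ u ≠ v1) ∧ (u <+: v2 ∧ u ≠ v2)

lemma decomp_bool (u : List Bool) :
    (∃ i, u = List.replicate i false) ∨
    ∃ i w, u = List.replicate i false ++ true :: w := by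
  induction u with
  | nil => exact Or.inl ⟨0, rfl⟩
  | cons b u ih =>
    cases b
    · rcases ih with ⟨i, rfl⟩ | ⟨i, w, rfl⟩
      · exact Or.inl ⟨i + 1, rfl⟩
      · exact Or.inr ⟨i + 1, w, rfl⟩
    · exact Or.inr ⟨0, u, rfl⟩

lemma rep_prefix {i j : ℕ} (h : i ≤ j) :
    List.replicate i false <+: List.replicate j false := by
  refine ⟨List.replicate (j - i) false, ?_⟩
  rw [← List.replicate_add]
  congr 1
  omega

lemma rep_succ (j : ℕ) :
    List.replicate (j + 1) false = List.replicate j false ++ [false] := by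
  rw [List.replicate_add]; rfl

lemma incomp_key (j : ℕ) (w : List Bool) :
    Incomp (List.replicate j false ++ true :: w) (List.replicate (j + 1) false) := by
  constructor <;> rw [rep_succ] <;> intro hp
  · have := (List.cons_prefix_cons.mp ((List.prefix_append_right_inj _).mp hp)).1
    simp at this
  · have := (List.cons_prefix_cons.mp ((List.prefix_append_right_inj _).mp hp)).1
    simp at this

/-- If every node of `l*` is labeled 1 and there is an infinite `I ⊆ ℕ` such
that for `i ∈ I` the 1-labeled nodes of the subtree rooted at `l^i·r` form a
perfect set while for `i ∉ I` this subtree has no 1-labeled node, then the set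
of 1-labeled nodes of the whole tree is perfect. -/
theorem perfect_assembled (t' : List Bool → Bool)
    (h1 : ∀ i : ℕ, t' (List.replicate i false) = true)
    (h2 : ∃ I : Set ℕ, I.Infinite ∧
      (∀ i ∈ I, IsPerfect {w : List Bool |
          t' (List.replicate i false ++ true :: w) = true}) ∧
      (∀ i ∉ I, ∀ w : List Bool,
          t' (List.replicate i false ++ true :: w) = false)) :
    IsPerfect {u : List Bool | t' u = true} := by
  obtain ⟨I, hInf, hP, hN⟩ := h2
  constructor
  · exact ⟨[], by simpa using h1 0⟩
  intro u hu
  rcases decomp_bool u with ⟨i, rfl⟩ | ⟨i, w, rfl⟩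
  · -- u = l^i
    obtain ⟨j, hjI, hij⟩ := hInf.exists_gt i
    obtain ⟨⟨w, hw⟩, -⟩ := hP j hjI
    refine ⟨List.replicate j false ++ true :: w, hw,
      List.replicate (j + 1) false, by simpa using h1 (j + 1),
      incomp_key j w, ⟨?_, ?_⟩, ⟨rep_prefix (by omega), ?_⟩⟩
    · exact (rep_prefix hij.le).trans ⟨true :: w, rfl⟩
    · intro h
      have : (List.replicate i false).length =
          (List.replicate j false ++ true :: w).length := by rw [h]
      simp at this; omega
    · intro h
      have : (List.replicate i false).length =
          (List.replicate (j + 1) false).length := by rw [h]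
      simp at this; omega
  · -- u = l^i ++ true :: w
    have hiI : i ∈ I := by
      by_contra h
      have := hN i h w
      simp only [Set.mem_setOf_eq] at hu
      rw [hu] at this
      exact absurd this (by simp)
    obtain ⟨v1, hv1, v2, hv2, ⟨hi1, hi2⟩, ⟨hp1, hne1⟩, ⟨hp2, hne2⟩⟩ :=
      (hP i hiI).2 w hu
    refine ⟨List.replicate i false ++ true :: v1, hv1,
      List.replicate i false ++ true :: v2, hv2, ⟨?_, ?_⟩, ⟨?_, ?_⟩, ⟨?_, ?_⟩⟩
    · intro h
      exact hi1 ((List.cons_prefix_cons.mp ((List.prefix_append_right_inj _).mp h)).2)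
    · intro h
      exact hi2 ((List.cons_prefix_cons.mp ((List.prefix_append_right_inj _).mp h)).2)
    · exact (List.prefix_append_right_inj _).mpr (List.cons_prefix_cons.mpr ⟨rfl, hp1⟩)
    · intro h
      exact hne1 (by simpa using h)
    · exact (List.prefix_append_right_inj _).mpr (List.cons_prefix_cons.mpr ⟨rfl, hp2⟩)
    · intro h
      exact hne2 (by simpa using h)
end
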